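/- The fundamental representation π₃ is irreducible: every ℚ(q)-linear subspace V ⊆ F satisfying π₃(t_{ij})(V) ⊆ V for all 1 ≤ i,j ≤ 7 is either {0} or all of F. -/

import Mathlib

/-!
The entries π₃(t₄₃) and π₃(t₅₄) are nonzero multiples of the ladder operators a⁻k and ka⁺, which
send |m + 1⟩ to q^{m+1}(1 - q^{2m+2})|m⟩ and |m⟩ to q^{m+1}|m + 1⟩. Both weights are nonzero in
ℚ(q), so applying a⁻k to a nonzero invariant vector until it is killed leaves a nonzero multiple
of |0⟩ in V, and raising |0⟩ with ka⁺ then produces every |m⟩.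
-/

open TensorProduct

noncomputable section

abbrev Fq : Type := RatFunc ℚ

def q : Fq := RatFunc.X

abbrev F : Type := ℕ →₀ Fq

def ket (m : ℕ) : F := Finsupp.single m 1

/-- Linear operator on the Fock space from its action on the basis. -/
def opOf (v : ℕ → F) : F →ₗ[Fq] F := Finsupp.lift F Fq ℕ v

/-- q²-oscillator K -/
def K2 : F →ₗ[Fq] F := opOf fun m => q ^ (2 * m) • ket m
/-- q²-oscillator A⁺ -/
def Ap : F →ₗ[Fq] F := opOf fun m => ket (m + 1)
/-- q²-oscillator A⁻ -/
def Am : F →ₗ[Fq] F := opOf fun m => (1 - q ^ (4 * m)) • ket (m - 1)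
/-- q-oscillator k -/
def kk : F →ₗ[Fq] F := opOf fun m => q ^ m • ket m
/-- q-oscillator a⁺ -/
def ap : F →ₗ[Fq] F := opOf fun m => ket (m + 1)
/-- q-oscillator a⁻ -/
def am : F →ₗ[Fq] F := opOf fun m => (1 - q ^ (2 * m)) • ket (m - 1)

def pi1 (α β μ ν κ σ : Fq) : Matrix (Fin 7) (Fin 7) (F →ₗ[Fq] F) :=
  !![μ • Am, α • K2, 0, 0, 0, 0, 0;
     β • K2, ν • Ap, 0, 0, 0, 0, 0;
     0, 0, κ • LinearMap.id, 0, 0, 0, 0;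
     0, 0, 0, σ • LinearMap.id, 0, 0, 0;
     0, 0, 0, 0, κ⁻¹ • LinearMap.id, 0, 0;
     0, 0, 0, 0, 0, ν⁻¹ • Am, (q ^ 2 * β⁻¹) • K2;
     0, 0, 0, 0, 0, (q ^ 2 * α⁻¹) • K2, μ⁻¹ • Ap]

def pi2 (α β μ ν κ σ : Fq) : Matrix (Fin 7) (Fin 7) (F →ₗ[Fq] F) :=
  !![κ • LinearMap.id, 0, 0, 0, 0, 0, 0;
     0, μ • Am, α • K2, 0, 0, 0, 0;
     0, β • K2, ν • Ap, 0, 0, 0, 0;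
     0, 0, 0, σ • LinearMap.id, 0, 0, 0;
     0, 0, 0, 0, ν⁻¹ • Am, (q ^ 2 * β⁻¹) • K2, 0;
     0, 0, 0, 0, (q ^ 2 * α⁻¹) • K2, μ⁻¹ • Ap, 0;
     0, 0, 0, 0, 0, 0, κ⁻¹ • LinearMap.id]

def pi3 (α μ κa κb : Fq) : Matrix (Fin 7) (Fin 7) (F →ₗ[Fq] F) :=
  !![κa • LinearMap.id, 0, 0, 0, 0, 0, 0;
     0, κb • LinearMap.id, 0, 0, 0, 0, 0;
     0, 0, μ • (am ∘ₗ am), α • (kk ∘ₗ am), (-((1 + q ^ 2) * μ)⁻¹ * α ^ 2) • (kk ∘ₗ kk), 0, 0;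
     0, 0, (-(1 + q ^ 2) * α⁻¹ * μ) • (am ∘ₗ kk), am ∘ₗ ap - kk ∘ₗ kk, (-(q * μ)⁻¹ * α) • (kk ∘ₗ ap), 0, 0;
     0, 0, (-(1 + q ^ 2) * q ^ 2 * α⁻¹ ^ 2 * μ) • (kk ∘ₗ kk), ((1 + q ^ 2) * α⁻¹) • (kk ∘ₗ ap), μ⁻¹ • (ap ∘ₗ ap), 0, 0;
     0, 0, 0, 0, 0, κb⁻¹ • LinearMap.id, 0;
     0, 0, 0, 0, 0, 0, κa⁻¹ • LinearMap.id]

def rhoB : Fin 7 → ℤ := ![5, 3, 1, 0, -1, -3, -5]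

def CB : Matrix (Fin 7) (Fin 7) Fq := fun i j => if (i : ℕ) + (j : ℕ) = 6 then q ^ rhoB j else 0

theorem Finsupp.submodule_eq_top_of_forall_single_one_mem {ι R : Type*} [Semiring R]
    {V : Submodule R (ι →₀ R)} (h : ∀ i, single i (1 : R) ∈ V) : V = ⊤ := by
  rw [eq_top_iff, ← (Finsupp.basisSingleOne (R := R) (ι := ι)).span_eq, Submodule.span_le]
  rintro _ ⟨i, rfl⟩
  simpa using h i

section LadderOperators

variable {K : Type*} [Field K] {V : Submodule K (ℕ →₀ K)}

open Finsupp

theorem single_zero_one_mem_of_apply_pos_eq_zero {v : ℕ →₀ K} (hv : v ∈ V) (hne : v ≠ 0)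
    (hsupp : ∀ m, 0 < m → v m = 0) : single 0 1 ∈ V := by
  have hv_eq : v = single 0 (v 0) := by
    ext (_ | m)
    · simp
    · simp [hsupp (m + 1) m.succ_pos]
  have h0 : v 0 ≠ 0 := fun h => hne (by rw [hv_eq, h, single_zero])
  rw [hv_eq, ← mul_one (v 0), ← smul_eq_mul, ← smul_single] at hv
  exact (V.smul_mem_iff h0).1 hv

theorem single_zero_one_mem_of_lowering_mem (L : (ℕ →₀ K) →ₗ[K] (ℕ →₀ K)) (c : ℕ → K)
    (hL : ∀ v n, L v n = c n * v (n + 1)) (hc : ∀ n, c n ≠ 0) (hV : ∀ v ∈ V, L v ∈ V)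
    (hbot : V ≠ ⊥) : single 0 1 ∈ V := by
  suffices h : ∀ N, ∀ v ∈ V, v ≠ 0 → (∀ m, N < m → v m = 0) → single 0 1 ∈ V by
    obtain ⟨v, hv, hne⟩ := (Submodule.ne_bot_iff V).1 hbot
    refine h (v.support.sup id) v hv hne fun m hm => ?_
    by_contra hvm
    exact absurd (Finset.le_sup (f := id) (mem_support_iff.2 hvm)) (not_le.2 hm)
  intro N
  induction N with
  | zero => exact fun v hv hne hsupp => single_zero_one_mem_of_apply_pos_eq_zero hv hne hsupp
  | succ N ih =>
    intro v hv hne hsupp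
    by_cases hLv : L v = 0
    · refine single_zero_one_mem_of_apply_pos_eq_zero hv hne fun m hm => ?_
      have := DFunLike.congr_fun hLv (m - 1)
      rw [hL, Nat.sub_add_cancel hm, Finsupp.zero_apply] at this
      exact (mul_eq_zero.1 this).resolve_left (hc _)
    · exact ih (L v) (hV v hv) hLv fun m hm => by rw [hL, hsupp (m + 1) (by omega), mul_zero]

theorem single_one_mem_of_raising_mem (R : (ℕ →₀ K) →ₗ[K] (ℕ →₀ K)) (d : ℕ → K)
    (hR : ∀ m, R (single m 1) = d m • single (m + 1) 1) (hd : ∀ m, d m ≠ 0)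
    (hV : ∀ v ∈ V, R v ∈ V) (h0 : single 0 1 ∈ V) (m : ℕ) : single m 1 ∈ V := by
  induction m with
  | zero => exact h0
  | succ m ih => exact (V.smul_mem_iff (hd m)).1 (hR m ▸ hV _ ih)

theorem eq_bot_or_eq_top_of_ladder_mem (L R : (ℕ →₀ K) →ₗ[K] (ℕ →₀ K)) (c d : ℕ → K)
    (hL : ∀ v n, L v n = c n * v (n + 1)) (hc : ∀ n, c n ≠ 0)
    (hR : ∀ m, R (single m 1) = d m • single (m + 1) 1) (hd : ∀ m, d m ≠ 0)
    (hVL : ∀ v ∈ V, L v ∈ V) (hVR : ∀ v ∈ V, R v ∈ V) : V = ⊥ ∨ V = ⊤ :=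
  or_iff_not_imp_left.2 fun hbot => Finsupp.submodule_eq_top_of_forall_single_one_mem
    (single_one_mem_of_raising_mem R d hR hd hVR
      (single_zero_one_mem_of_lowering_mem L c hL hc hVL hbot))

end LadderOperators

theorem q_ne_zero : q ≠ 0 := RatFunc.X_ne_zero

theorem q_pow_ne_C {n : ℕ} (hn : n ≠ 0) (a : ℚ) : q ^ n ≠ RatFunc.C a := by
  rw [q, ← RatFunc.algebraMap_X, ← map_pow, ← RatFunc.algebraMap_C,
    (RatFunc.algebraMap_injective ℚ).ne_iff]
  exact fun h => hn (by simpa using congrArg Polynomial.natDegree h)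

theorem one_sub_q_pow_ne_zero {n : ℕ} (hn : n ≠ 0) : 1 - q ^ n ≠ 0 :=
  sub_ne_zero.2 (by simpa using (q_pow_ne_C hn 1).symm)

theorem one_add_q_sq_ne_zero : 1 + q ^ 2 ≠ 0 := by
  rw [add_comm, ← sub_neg_eq_add, sub_ne_zero]
  simpa using q_pow_ne_C two_ne_zero (-1)

theorem opOf_ket (f : ℕ → F) (m : ℕ) : opOf f (ket m) = f m := by
  simp [opOf, ket]

theorem am_comp_kk_apply (v : F) (n : ℕ) :
    (am ∘ₗ kk) v n = (q ^ (n + 1) * (1 - q ^ (2 * (n + 1)))) * v (n + 1) := by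
  have h : Finsupp.lapply n ∘ₗ am ∘ₗ kk =
      (q ^ (n + 1) * (1 - q ^ (2 * (n + 1)))) • Finsupp.lapply (n + 1) := by
    refine Finsupp.lhom_ext fun m b => ?_
    rw [← mul_one b, ← smul_eq_mul, ← Finsupp.smul_single, ← ket.eq_1]
    simp only [LinearMap.comp_apply, LinearMap.smul_apply, map_smul, kk, am, opOf_ket]
    rcases m with _ | m
    · simp [ket]
    · rcases eq_or_ne m n with rfl | h
      · simp [ket]
      · simp [ket, h]
  exact LinearMap.congr_fun h v

theorem kk_comp_ap_ket (m : ℕ) : (kk ∘ₗ ap) (ket m) = q ^ (m + 1) • ket (m + 1) := by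
  rw [LinearMap.comp_apply, ap, opOf_ket, kk, opOf_ket]

theorem pi3_irreducible_general
    (α μ κa κb : Fq) (hα : α ≠ 0) (hμ : μ ≠ 0) :
    ∀ V : Submodule Fq F,
      (∀ i j : Fin 7, ∀ v ∈ V, pi3 α μ κa κb i j v ∈ V) → V = ⊥ ∨ V = ⊤ := by
  intro V hV
  have hd : (1 + q ^ 2) * α⁻¹ ≠ 0 := mul_ne_zero one_add_q_sq_ne_zero (inv_ne_zero hα)
  have hc : -(1 + q ^ 2) * α⁻¹ * μ ≠ 0 := by rw [neg_mul]; exact mul_ne_zero (neg_ne_zero.2 hd) hμ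
  refine eq_bot_or_eq_top_of_ladder_mem (am ∘ₗ kk) (kk ∘ₗ ap)
    (fun n => q ^ (n + 1) * (1 - q ^ (2 * (n + 1)))) (fun m => q ^ (m + 1)) am_comp_kk_apply
    (fun n => mul_ne_zero (pow_ne_zero _ q_ne_zero) (one_sub_q_pow_ne_zero (by omega)))
    kk_comp_ap_ket (fun m => pow_ne_zero _ q_ne_zero) (fun v hv => ?_) (fun v hv => ?_)
  -- `Fin 7` is 0-indexed: these are the entries t₄₃ and t₅₄.
  · exact (V.smul_mem_iff hc).1 (by simpa [pi3] using hV 3 2 v hv)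
  · exact (V.smul_mem_iff hd).1 (by simpa [pi3] using hV 4 3 v hv)

/-- the fundamental representation π₃ is irreducible. -/
theorem pi3_irreducible
    (α μ κa κb : Fq) (hα : α ≠ 0) (hμ : μ ≠ 0) (hκa : κa ≠ 0) (hκb : κb ≠ 0) :
    ∀ V : Submodule Fq F,
      (∀ i j : Fin 7, ∀ v ∈ V, pi3 α μ κa κb i j v ∈ V) → V = ⊥ ∨ V = ⊤ :=
  pi3_irreducible_general α μ κa κb hα hμ
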